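/- arXiv:1610.03115 — 7 statements merged into one kernel-verified Lean document; each statement's English description precedes it below -/
import Mathlib

section
/- For any finite simple graph G of order n, γ_P(G) ≤ ⌊n / γ_P(Ḡ)⌋, where Ḡ is the complement of G. -/
/-- The set of observed vertices in the power domination process started from `S`:
initially `N[S]` (the closed neighborhood of `S`), and while some observed vertex `v`
has exactly one unobserved neighbor `w`, `w` becomes observed. -/
inductive SimpleGraph.Observed {V : Type*} (G : SimpleGraph V) (S : Set V) : V → Prop
  | mem : ∀ v ∈ S, SimpleGraph.Observed G S v
  | dominate : ∀ v ∈ S, ∀ w, G.Adj v w → SimpleGraph.Observed G S w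
  | force : ∀ v w, SimpleGraph.Observed G S v → G.Adj v w →
      (∀ u, G.Adj v u → u ≠ w → SimpleGraph.Observed G S u) → SimpleGraph.Observed G S w

/-- `S` is a power dominating set of `G` if every vertex becomes observed. -/
def SimpleGraph.IsPowerDominating {V : Type*} (G : SimpleGraph V) (S : Set V) : Prop :=
  ∀ v, G.Observed S v

/-- The power domination number: minimum cardinality of a power dominating set. -/
noncomputable def SimpleGraph.powerDomNum {V : Type*} (G : SimpleGraph V) : ℕ :=
  sInf {k | ∃ S : Finset V, S.card = k ∧ G.IsPowerDominating ↑S}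

/-- `S` is a dominating set of `G` if `N[S] = V`. -/
def SimpleGraph.IsDominating {V : Type*} (G : SimpleGraph V) (S : Set V) : Prop :=
  ∀ v, v ∈ S ∨ ∃ u ∈ S, G.Adj u v

/-- The domination number: minimum cardinality of a dominating set. -/
noncomputable def SimpleGraph.domNum {V : Type*} (G : SimpleGraph V) : ℕ :=
  sInf {k | ∃ S : Finset V, S.card = k ∧ G.IsDominating ↑S}

/-- The minimum degree `δ(G)`. -/
noncomputable def SimpleGraph.minDeg {V : Type*} (G : SimpleGraph V) : ℕ :=
  sInf (Set.range fun v => (G.neighborSet v).ncard)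

/-- The vertex connectivity `κ(G)`: the minimum cardinality of a set `S` of vertices
such that removing `S` disconnects `G` (leaves a non-preconnected graph) or leaves
at most one vertex.  In particular `κ(Kₙ) = n - 1` and `κ(G) = 0` for disconnected `G`. -/
noncomputable def SimpleGraph.vertexConn {V : Type*} (G : SimpleGraph V) [Fintype V] : ℕ :=
  sInf {k | ∃ S : Finset V, S.card = k ∧
    (¬ (G.induce ((↑S : Set V)ᶜ)).Preconnected ∨ Fintype.card V ≤ S.card + 1)}

/-- The edge connectivity `λ(G)`: the minimum cardinality of a set of edges of `G`
whose removal disconnects `G`. -/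
noncomputable def SimpleGraph.edgeConn {V : Type*} (G : SimpleGraph V) : ℕ :=
  sInf {k | ∃ F : Finset (Sym2 V), ↑F ⊆ G.edgeSet ∧ F.card = k ∧
    ¬ (G.deleteEdges ↑F).Preconnected}

/-- `G` is super-λ: `G` is maximally connected (`κ(G) = λ(G) = δ(G)`) and every
minimum edge-cut is trivial, i.e. consists of all edges incident with a single vertex. -/
def SimpleGraph.IsSuperLambda {V : Type*} (G : SimpleGraph V) [Fintype V] : Prop :=
  G.vertexConn = G.edgeConn ∧ G.edgeConn = G.minDeg ∧
  ∀ F : Finset (Sym2 V), ↑F ⊆ G.edgeSet → ¬ (G.deleteEdges ↑F).Preconnected →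
    F.card = G.edgeConn → ∃ v : V, (↑F : Set (Sym2 V)) = {e ∈ G.edgeSet | v ∈ e}

/-!
By the Jaeger–Payan argument, `V` splits into `γ(Ḡ)` classes each of which dominates `G`:
take a map `f : V → V` sending every vertex to a vertex not adjacent to it in `G`, so that
the fibres are stars of `Ḡ` and the image dominates `Ḡ`. Among such maps with the fewest
fibres, choose one with the fewest `G`-edges inside fibres. If a vertex `v` were not dominated
by a fibre `A`, then `v` has a `G`-neighbour in its own fibre (else `A` and that fibre merge
into one star centred at `v`), so moving `v` into `A`, recentred at `v`, removes `G`-edges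
inside fibres without adding fibres. A smallest fibre is then a dominating set of `G` of size
at most `n / γ(Ḡ)`, and dominating sets are power dominating.
-/

open Finset

namespace Finset

variable {α β : Type*} [Fintype α] [DecidableEq α] [DecidableEq β]

lemma image_piecewise_const_subset (S : Finset α) (x : β) (f : α → β) :
    univ.image (S.piecewise (fun _ => x) f) ⊆ insert x (Sᶜ.image f) := by
  intro y hy
  obtain ⟨a, -, rfl⟩ := mem_image.mp hy
  by_cases ha : a ∈ S
  · simp [piecewise_eq_of_mem _ _ _ ha]
  · simp [piecewise_eq_of_notMem _ _ _ ha, mem_image_of_mem f (mem_compl.mpr ha)]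

lemma card_image_compl_add_card_le {S : Finset α} {T : Finset β} {f : α → β}
    (hT : T ⊆ univ.image f) (hS : ∀ a, f a ∈ T → a ∈ S) :
    #(Sᶜ.image f) + #T ≤ #(univ.image f) := by
  have hsub : Sᶜ.image f ⊆ univ.image f \ T := by
    intro y hy
    obtain ⟨a, ha, rfl⟩ := mem_image.mp hy
    exact mem_sdiff.mpr ⟨mem_image_of_mem f (mem_univ a), fun h => mem_compl.mp ha (hS a h)⟩
  rw [← card_sdiff_add_card_eq_card hT]
  exact Nat.add_le_add_right (card_le_card hsub) _

end Finset

namespace SimpleGraph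

variable {V : Type*} {G : SimpleGraph V}

lemma IsDominating.isPowerDominating {S : Set V} (h : G.IsDominating S) :
    G.IsPowerDominating S := fun v =>
  (h v).elim (Observed.mem v) fun ⟨u, hu, huv⟩ => Observed.dominate u hu v huv

lemma not_observed_empty (v : V) : ¬ G.Observed ∅ v := by
  intro h
  induction h with
  | mem _ hv => exact hv
  | dominate _ hv => exact hv
  | force _ _ _ _ _ ih => exact ih

lemma powerDomNum_le_card {S : Finset V} (h : G.IsPowerDominating ↑S) : G.powerDomNum ≤ #S :=
  Nat.sInf_le ⟨S, rfl, h⟩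

lemma powerDomNum_pos [Finite V] [Nonempty V] : 0 < G.powerDomNum := by
  have := Fintype.ofFinite V
  obtain ⟨S, hS, hpd⟩ :
      G.powerDomNum ∈ {k | ∃ S : Finset V, #S = k ∧ G.IsPowerDominating ↑S} :=
    Nat.sInf_mem ⟨_, univ, rfl, fun v => Observed.mem v (by simp)⟩
  obtain ⟨v⟩ := ‹Nonempty V›
  rw [← hS, card_pos, nonempty_iff_ne_empty]
  rintro rfl
  exact not_observed_empty v (by simpa using hpd v)

variable (G) in
/-- The fibres of such a map are stars of `Gᶜ` centred at the values of the map. -/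
def IsComplStarMap (f : V → V) : Prop := ∀ v, ¬ G.Adj (f v) v

lemma isComplStarMap_id : G.IsComplStarMap id := fun _ => G.irrefl

lemma IsComplStarMap.piecewise_const {f : V → V} (hf : G.IsComplStarMap f) {S : Finset V}
    [∀ a, Decidable (a ∈ S)] {x : V} (hx : ∀ w ∈ S, ¬ G.Adj x w) :
    G.IsComplStarMap (S.piecewise (fun _ => x) f) := fun w => by
  by_cases hw : w ∈ S
  · simpa [piecewise_eq_of_mem _ _ _ hw] using hx w hw
  · simpa [piecewise_eq_of_notMem _ _ _ hw] using hf w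

section Fintype

variable [Fintype V] [DecidableEq V]

lemma IsComplStarMap.isDominating_compl_image {f : V → V} (hf : G.IsComplStarMap f) :
    Gᶜ.IsDominating ↑(univ.image f) := fun v => by
  by_cases hv : f v = v
  · exact Or.inl (by simpa [hv] using mem_image_of_mem f (mem_univ v))
  · exact Or.inr ⟨f v, by simp, (compl_adj G _ _).mpr ⟨hv, hf v⟩⟩

variable (G) [DecidableRel G.Adj] in
def monochromaticPairs (f : V → V) : Finset (V × V) :=
  univ.filter fun p => G.Adj p.1 p.2 ∧ f p.1 = f p.2

lemma monochromaticPairs_piecewise_const_ssubset [DecidableRel G.Adj] {f : V → V}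
    {S : Finset V} {x : V} (hout : ∀ z ∉ S, f z ≠ x)
    (hin : ∀ w ∈ S, ∀ z ∈ S, G.Adj w z → f w = f z)
    {w z : V} (hw : w ∈ S) (hz : z ∉ S) (hwz : G.Adj w z) (hfwz : f w = f z) :
    G.monochromaticPairs (S.piecewise (fun _ => x) f) ⊂ G.monochromaticPairs f := by
  have hsub : G.monochromaticPairs (S.piecewise (fun _ => x) f) ⊆ G.monochromaticPairs f := by
    rintro ⟨a, b⟩ hab
    simp only [monochromaticPairs, mem_filter, mem_univ, true_and] at hab ⊢
    refine ⟨hab.1, ?_⟩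
    by_cases ha : a ∈ S <;> by_cases hb : b ∈ S <;>
      simp only [piecewise_eq_of_mem, piecewise_eq_of_notMem, ha, hb, not_false_eq_true] at hab
    · exact hin a ha b hb hab.1
    · exact absurd hab.2.symm (hout b hb)
    · exact absurd hab.2 (hout a ha)
    · exact hab.2
  refine (ssubset_iff_of_subset hsub).mpr ⟨(w, z), by simp [monochromaticPairs, hwz, hfwz], ?_⟩
  simp [monochromaticPairs, piecewise_eq_of_mem _ _ _ hw, piecewise_eq_of_notMem _ _ _ hz,
    (hout z hz).symm]

lemma IsComplStarMap.exists_adj_of_forall_not_adj {f : V → V} (hf : G.IsComplStarMap f)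
    (hmin : ∀ g, G.IsComplStarMap g → #(univ.image f) ≤ #(univ.image g)) {u v : V}
    (huv : f u ≠ f v) (hv : ∀ a, f a = f u → ¬ G.Adj v a) :
    ∃ w, f w = f v ∧ G.Adj v w := by
  by_contra! hQ
  -- Else the fibres of `u` and `v` merge into one star centred at `v`, leaving fewer fibres.
  set S := univ.filter fun z => f z = f u ∨ f z = f v
  have hg := hf.piecewise_const (S := S) (x := v) fun z hz => by
    rcases (mem_filter.mp hz).2 with hz | hz
    exacts [hv z hz, hQ z hz]
  have h₁ := card_le_card (image_piecewise_const_subset S v f)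
  have h₂ := card_image_compl_add_card_le (f := f) (S := S) (T := {f u, f v})
    (by simp [insert_subset_iff]) (by simp [S])
  rw [card_pair huv] at h₂
  have := hmin _ hg
  have := card_insert_le v (Sᶜ.image f)
  omega

theorem IsComplStarMap.isDominating_fiber [DecidableRel G.Adj] {f : V → V}
    (hf : G.IsComplStarMap f)
    (hmin : ∀ g, G.IsComplStarMap g → #(univ.image f) ≤ #(univ.image g))
    (hopt : ∀ g, G.IsComplStarMap g → #(univ.image g) ≤ #(univ.image f) →
      #(G.monochromaticPairs f) ≤ #(G.monochromaticPairs g))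
    (u : V) : G.IsDominating ↑(univ.filter (f · = f u)) := by
  set A := univ.filter (f · = f u)
  intro v
  by_contra! hv
  simp only [A, coe_filter, mem_univ, true_and, Set.mem_ofPred_eq] at hv
  obtain ⟨hvA, hAv⟩ := hv
  have hvA' : ∀ a, f a = f u → ¬ G.Adj v a := fun a ha h => hAv a ha h.symm
  obtain ⟨w, hfw, hvw⟩ := hf.exists_adj_of_forall_not_adj hmin (Ne.symm hvA) hvA'
  set S := insert v A
  have hSv : ∀ a ∈ S, ¬ G.Adj v a := by
    simp only [S, A, mem_insert, mem_filter, mem_univ, true_and]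
    rintro a (rfl | ha)
    exacts [G.irrefl, hvA' a ha]
  have hg := hf.piecewise_const hSv
  have hcard := card_image_compl_add_card_le (f := f) (S := S) (T := {f u}) (by simp)
    fun a ha => mem_insert_of_mem (mem_filter.mpr ⟨mem_univ a, mem_singleton.mp ha⟩)
  rw [card_singleton] at hcard
  -- If `v` were already a value of `f` outside `S`, moving `S` to `v` would drop a fibre.
  have hout : ∀ z ∉ S, f z ≠ v := by
    rintro z hz rfl
    have := card_le_card (image_piecewise_const_subset S (f z) f)
    rw [insert_eq_of_mem (mem_image_of_mem f (mem_compl.mpr hz))] at this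
    have := hmin _ hg
    omega
  have hin : ∀ a ∈ S, ∀ b ∈ S, G.Adj a b → f a = f b := by
    intro a ha b hb hab
    have ha' : a ∈ A := (mem_insert.mp ha).resolve_left fun h => hSv b hb (h ▸ hab)
    have hb' : b ∈ A := (mem_insert.mp hb).resolve_left fun h => hSv a ha (h ▸ hab.symm)
    exact (mem_filter.mp ha').2.trans (mem_filter.mp hb').2.symm
  have hwS : w ∉ S := by
    simp only [S, A, mem_insert, mem_filter, mem_univ, true_and, not_or]
    exact ⟨(G.ne_of_adj hvw).symm, hfw ▸ hvA⟩
  have hlt := monochromaticPairs_piecewise_const_ssubset hout hin (mem_insert_self v A) hwS hvw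
    hfw.symm
  have := card_le_card (image_piecewise_const_subset S v f)
  have := card_insert_le v (Sᶜ.image f)
  exact (card_lt_card hlt).not_ge (hopt _ hg (by omega))

end Fintype

variable (G) in
theorem exists_isDominating_card_mul_card_le [Fintype V] [Nonempty V] :
    ∃ D B : Finset V,
      G.IsDominating ↑D ∧ Gᶜ.IsDominating ↑B ∧ #D * #B ≤ Fintype.card V := by
  classical
  obtain ⟨f₀, hf₀, hmin⟩ := (univ.filter G.IsComplStarMap).exists_min_image
    (fun f => #(univ.image f)) ⟨id, mem_filter.mpr ⟨mem_univ _, isComplStarMap_id⟩⟩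
  obtain ⟨f, hf, hopt⟩ := exists_min_image
      (univ.filter fun g => G.IsComplStarMap g ∧ #(univ.image g) ≤ #(univ.image f₀))
      (fun g => #(G.monochromaticPairs g)) ⟨f₀, by simpa using (mem_filter.mp hf₀).2⟩
  simp only [mem_filter, mem_univ, true_and] at hf₀ hmin hf hopt
  have hfib := hf.1.isDominating_fiber (fun g hg => hf.2.trans (hmin g hg))
    (fun g hg hgf => hopt g ⟨hg, hgf.trans hf.2⟩)
  obtain ⟨u, -, hu⟩ :=
    univ.exists_min_image (fun u => #(univ.filter (f · = f u))) univ_nonempty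
  refine ⟨_, _, hfib u, hf.1.isDominating_compl_image, ?_⟩
  calc #(univ.filter (f · = f u)) * #(univ.image f)
      ≤ ∑ c ∈ univ.image f, #(univ.filter (f · = c)) := by
        rw [mul_comm, ← smul_eq_mul]
        refine card_nsmul_le_sum _ _ _ fun c hc => ?_
        obtain ⟨w, -, rfl⟩ := mem_image.mp hc
        exact hu w (mem_univ w)
    _ = Fintype.card V := (card_eq_sum_card_image f univ).symm

end SimpleGraph

theorem powerDomNum_le_card_div_powerDomNum_compl {V : Type*} [Fintype V] [Nonempty V]
    (G : SimpleGraph V) :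
    G.powerDomNum ≤ Fintype.card V / Gᶜ.powerDomNum := by
  obtain ⟨D, B, hD, hB, hDB⟩ := G.exists_isDominating_card_mul_card_le
  rw [Nat.le_div_iff_mul_le Gᶜ.powerDomNum_pos]
  calc G.powerDomNum * Gᶜ.powerDomNum
      ≤ #D * #B := Nat.mul_le_mul (SimpleGraph.powerDomNum_le_card hD.isPowerDominating)
        (SimpleGraph.powerDomNum_le_card hB.isPowerDominating)
    _ ≤ Fintype.card V := hDB
end

section
/- Let G be a finite simple graph such that neither G nor its complement Ḡ has isolated vertices. Then γ_P(Ḡ) ≤ δ(G). Moreover, if δ(G) = 1, then γ_P(Ḡ) = 1. -/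
theorem powerDomNum_compl_le_minDeg {V : Type*} [Fintype V] (G : SimpleGraph V)
    (hG : ∀ v, (G.neighborSet v).Nonempty) (hGc : ∀ v, (Gᶜ.neighborSet v).Nonempty) :
    Gᶜ.powerDomNum ≤ G.minDeg ∧ (G.minDeg = 1 → Gᶜ.powerDomNum = 1) := by
  classical
  by_cases hV : Nonempty V
  · -- pick a vertex of minimum degree
    have hrange : (Set.range fun v => (G.neighborSet v).ncard).Nonempty :=
      Set.range_nonempty _
    obtain ⟨v, hv⟩ : ∃ v, (G.neighborSet v).ncard = G.minDeg := by
      have := Nat.sInf_mem hrange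
      obtain ⟨v, hv⟩ := this
      exact ⟨v, hv⟩
    obtain ⟨u₀, hu₀⟩ := hG v
    have hu₀' : u₀ ∈ G.neighborFinset v := by
      simpa using hu₀
    set S : Finset V := insert v ((G.neighborFinset v).erase u₀) with hS
    have hvnot : v ∉ (G.neighborFinset v).erase u₀ := by
      intro h
      have := Finset.mem_of_mem_erase h
      simp at this
    have hncard : (G.neighborSet v).ncard = (G.neighborFinset v).card := by
      rw [Set.ncard_eq_toFinset_card']
      congr 1
    have hdegpos : 1 ≤ (G.neighborFinset v).card :=
      Finset.card_pos.mpr ⟨u₀, hu₀'⟩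
    have hScard : S.card = G.minDeg := by
      rw [hS, Finset.card_insert_of_notMem hvnot, Finset.card_erase_of_mem hu₀',
        ← hv, hncard]
      omega
    -- key: every vertex other than u₀ is observed
    have hobs : ∀ u, u ≠ u₀ → Gᶜ.Observed ↑S u := by
      intro u hu
      by_cases huS : u ∈ S
      · exact SimpleGraph.Observed.mem u (by exact_mod_cast huS)
      · have hvS : v ∈ S := Finset.mem_insert_self _ _
        have huv : u ≠ v := fun h => huS (h ▸ hvS)
        have hadj : Gᶜ.Adj v u := by
          rw [SimpleGraph.compl_adj]
          refine ⟨huv.symm, fun hadj => ?_⟩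
          have : u ∈ (G.neighborFinset v).erase u₀ :=
            Finset.mem_erase.mpr ⟨hu, by simpa using hadj⟩
          exact huS (Finset.mem_insert_of_mem this)
        exact SimpleGraph.Observed.dominate v (by exact_mod_cast hvS) u hadj
    have hpd : Gᶜ.IsPowerDominating ↑S := by
      intro u
      by_cases hu : u = u₀
      · subst hu
        obtain ⟨x, hx⟩ := hGc u
        have hxu : x ≠ u := fun h => Gᶜ.irrefl (h ▸ hx)
        exact SimpleGraph.Observed.force x u (hobs x hxu) hx.symm
          (fun w _ hw => hobs w hw)
      · exact hobs u hu
    have hle : Gᶜ.powerDomNum ≤ G.minDeg :=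
      Nat.sInf_le ⟨S, hScard, hpd⟩
    refine ⟨hle, fun hδ => ?_⟩
    have hge : 1 ≤ Gᶜ.powerDomNum := by
      rw [Nat.one_le_iff_ne_zero]
      intro h0
      have hne : {k | ∃ S : Finset V, S.card = k ∧ Gᶜ.IsPowerDominating ↑S}.Nonempty :=
        ⟨G.minDeg, S, hScard, hpd⟩
      have := (Nat.sInf_eq_zero.mp h0).resolve_right (by
        intro h; rw [h] at hne; exact Set.not_nonempty_empty hne)
      obtain ⟨T, hT0, hTpd⟩ := this
      have hTe : T = ∅ := Finset.card_eq_zero.mp hT0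
      obtain ⟨w⟩ := hV
      have hw := hTpd w
      rw [hTe] at hw
      clear_value S
      clear hδ hle hpd hobs hScard hdegpos hncard hvnot hS hu₀' hu₀ hv hrange
      induction hw with
      | mem v hv => simp at hv
      | dominate v hv w hadj => simp at hv
      | force v w hvobs hadj hall ih ih2 => exact ih
    omega
  · -- V is empty
    have hempty : IsEmpty V := not_nonempty_iff.mp hV
    have h0 : Gᶜ.powerDomNum = 0 := by
      have : (0 : ℕ) ∈ {k | ∃ S : Finset V, S.card = k ∧ Gᶜ.IsPowerDominating ↑S} :=
        ⟨∅, Finset.card_empty, fun v => (hempty.false v).elim⟩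
      exact Nat.le_zero.mp (Nat.sInf_le this)
    have hmd : G.minDeg = 0 := by
      unfold SimpleGraph.minDeg
      rw [Set.range_eq_empty]
      exact Nat.sInf_empty
    rw [h0, hmd]
    exact ⟨Nat.zero_le _, fun h => absurd h one_ne_zero.symm⟩
end

section
/- Suppose G is a finite simple graph with diam(G) = 2 such that the complement Ḡ has no isolated vertices. Then γ_P(G) ≤ κ(G) − 1 or γ_P(Ḡ) ≤ 2. -/
private lemma two_step {V : Type*} {G : SimpleGraph V} {u v : V} (h2 : G.edist u v ≤ 2)
    (hne : u ≠ v) (hna : ¬ G.Adj u v) : ∃ z, G.Adj u z ∧ G.Adj z v := by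
  have htop : G.edist u v ≠ ⊤ := fun h => by rw [h] at h2; exact absurd h2 (by simp)
  obtain ⟨p, hp⟩ := SimpleGraph.exists_walk_of_edist_ne_top htop
  have hlen : p.length ≤ 2 := by
    have h2' : (p.length : ℕ∞) ≤ 2 := by rw [hp]; exact h2
    exact_mod_cast h2'
  cases p with
  | nil => exact absurd rfl hne
  | cons h q =>
    cases q with
    | nil => exact absurd h hna
    | cons h' q' =>
      cases q' with
      | nil => exact ⟨_, h, h'⟩
      | cons h'' q'' =>
        simp only [SimpleGraph.Walk.length_cons] at hlen
        omega

private lemma not_reachable_of_no_edge {V : Type*} {H : SimpleGraph V}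
    (h : ∀ a b, ¬ H.Adj a b) {u v : V} (hne : u ≠ v) : ¬ H.Reachable u v := by
  intro hr
  obtain ⟨p⟩ := hr
  cases p with
  | nil => exact hne rfl
  | cons h' _ => exact h _ _ h'

theorem powerDomNum_le_vertexConn_sub_one_or {V : Type*} [Fintype V] (G : SimpleGraph V)
    (hdiam : G.ediam = 2) (hGc : ∀ v, (Gᶜ.neighborSet v).Nonempty) :
    G.powerDomNum ≤ G.vertexConn - 1 ∨ Gᶜ.powerDomNum ≤ 2 := by
  classical
  have hedist : ∀ u v : V, G.edist u v ≤ 2 := fun u v => hdiam ▸ SimpleGraph.edist_le_ediam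
  -- a nonadjacent pair of distinct vertices
  have hpair : ∃ x y : V, x ≠ y ∧ ¬ G.Adj x y := by
    by_contra h
    push_neg at h
    have h1 : G.ediam ≤ 1 := by
      apply SimpleGraph.ediam_le_of_edist_le
      intro u v
      by_cases huv : u = v
      · subst huv; simp [SimpleGraph.edist_self]
      · rw [SimpleGraph.edist_eq_one_iff_adj.mpr (h u v huv)]
    rw [hdiam] at h1
    exact absurd h1 (by norm_num)
  obtain ⟨x, y, hxy, hnadj⟩ := hpair
  set S₀ : Finset V := Finset.univ \ {x, y} with hS₀
  have hnopre₀ : ¬ (G.induce ((↑S₀ : Set V)ᶜ)).Preconnected := by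
    have hnoedge : ∀ a b : ((↑S₀ : Set V)ᶜ : Set V), ¬ (G.induce ((↑S₀ : Set V)ᶜ)).Adj a b := by
      rintro ⟨a, ha⟩ ⟨b, hb⟩ hadj
      have ha' : a = x ∨ a = y := by
        by_cases h : a = x
        · exact Or.inl h
        · exact Or.inr ((by simpa [hS₀] using ha : ¬a = x → a = y) h)
      have hb' : b = x ∨ b = y := by
        by_cases h : b = x
        · exact Or.inl h
        · exact Or.inr ((by simpa [hS₀] using hb : ¬b = x → b = y) h)
      have hadj' : G.Adj a b := hadj
      rcases ha' with rfl | rfl <;> rcases hb' with rfl | rfl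
      · exact G.irrefl hadj'
      · exact hnadj hadj'
      · exact hnadj hadj'.symm
      · exact G.irrefl hadj'
    intro hpre
    exact not_reachable_of_no_edge hnoedge
      (u := ⟨x, by simp [hS₀]⟩) (v := ⟨y, by simp [hS₀]⟩)
      (fun h => hxy (congrArg Subtype.val h)) (hpre _ _)
  have hVcard : 2 ≤ Fintype.card V := Fintype.one_lt_card_iff_nontrivial.mpr ⟨x, y, hxy⟩
  have hS₀card : S₀.card = Fintype.card V - 2 := by
    rw [hS₀, Finset.card_sdiff_of_subset (Finset.subset_univ _), Finset.card_univ, Finset.card_pair hxy]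
  have hmem₀ : (Fintype.card V - 2) ∈ {k | ∃ S : Finset V, S.card = k ∧
      (¬ (G.induce ((↑S : Set V)ᶜ)).Preconnected ∨ Fintype.card V ≤ S.card + 1)} :=
    ⟨S₀, hS₀card, Or.inl hnopre₀⟩
  have hκle : G.vertexConn ≤ Fintype.card V - 2 := Nat.sInf_le hmem₀
  obtain ⟨S, hScard, hSdisj⟩ := Nat.sInf_mem (⟨_, hmem₀⟩ : Set.Nonempty {k | ∃ S : Finset V,
      S.card = k ∧ (¬ (G.induce ((↑S : Set V)ᶜ)).Preconnected ∨ Fintype.card V ≤ S.card + 1)})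
  have hScard' : S.card = G.vertexConn := hScard
  have hScut : ¬ (G.induce ((↑S : Set V)ᶜ)).Preconnected := by
    rcases hSdisj with h | h
    · exact h
    · exfalso; rw [hScard'] at h; omega
  have hScut' : ∃ A B : ((↑S : Set V)ᶜ : Set V), ¬ (G.induce ((↑S : Set V)ᶜ)).Reachable A B := by
    by_contra h; push_neg at h; exact hScut fun u v => h u v
  obtain ⟨A, B, hAB⟩ := hScut'
  -- main structural lemma
  have lemA : ∀ v : V, v ∉ S → ∃ w, w ∉ S ∧ v ≠ w ∧
      (∀ z, G.Adj v z → G.Adj w z → z ∈ S) ∧ ∃ s ∈ S, G.Adj v s := by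
    intro v hv
    have hv' : v ∈ ((↑S : Set V)ᶜ) := by simp [hv]
    obtain ⟨⟨w, hw'⟩, hnr⟩ : ∃ w : ((↑S : Set V)ᶜ : Set V),
        ¬ (G.induce ((↑S : Set V)ᶜ)).Reachable ⟨v, hv'⟩ w := by
      by_cases hr : (G.induce ((↑S : Set V)ᶜ)).Reachable ⟨v, hv'⟩ A
      · exact ⟨B, fun h => hAB (hr.symm.trans h)⟩
      · exact ⟨A, hr⟩
    have hwS : w ∉ S := by simpa using hw'
    have hvw : v ≠ w := by
      rintro rfl
      exact hnr (SimpleGraph.Reachable.refl _)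
    have hzS : ∀ z, G.Adj v z → G.Adj w z → z ∈ S := by
      intro z hvz hwz
      by_contra hz
      have hz' : z ∈ ((↑S : Set V)ᶜ) := by simp [hz]
      exact hnr ((SimpleGraph.Adj.reachable
          (show (G.induce ((↑S : Set V)ᶜ)).Adj ⟨v, hv'⟩ ⟨z, hz'⟩ from hvz)).trans
        (SimpleGraph.Adj.reachable
          (show (G.induce ((↑S : Set V)ᶜ)).Adj ⟨z, hz'⟩ ⟨w, hw'⟩ from hwz.symm)))
    have hnadjvw : ¬ G.Adj v w := fun h =>
      hnr (SimpleGraph.Adj.reachable (show (G.induce ((↑S : Set V)ᶜ)).Adj ⟨v, hv'⟩ ⟨w, hw'⟩ from h))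
    obtain ⟨z, hz1, hz2⟩ := two_step (hedist v w) hvw hnadjvw
    exact ⟨w, hwS, hvw, hzS, z, hzS z hz1 hz2.symm, hz1⟩
  have hAS : (A : V) ∉ S := by
    have h := A.2
    simp only [Set.mem_compl_iff, Finset.mem_coe] at h
    exact h
  obtain ⟨wA, -, -, -, s₀, hs₀S, hAs₀⟩ := lemA (A : V) hAS
  by_cases hCaseA : ∃ v s, v ∉ S ∧ s ∈ S ∧ G.Adj v s ∧ ∀ z, G.Adj v z → z ∈ S → z = s
  · -- Case A : γ_P(Gᶜ) ≤ 2
    obtain ⟨v, s, hvS, hsS, hvs, huniq⟩ := hCaseA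
    obtain ⟨w, hwS, hvw, hzS, -⟩ := lemA v hvS
    refine Or.inr (Nat.sInf_le ⟨{v, w}, Finset.card_pair hvw, ?_⟩)
    have hobs : ∀ z, z ≠ s → Gᶜ.Observed ↑({v, w} : Finset V) z := by
      intro z hzs
      by_cases hz : z = v ∨ z = w
      · exact SimpleGraph.Observed.mem z (by rcases hz with rfl | rfl <;> simp)
      · push_neg at hz
        obtain ⟨hzv, hzw⟩ := hz
        have hor : Gᶜ.Adj v z ∨ Gᶜ.Adj w z := by
          by_contra hc
          push_neg at hc
          have h1 : G.Adj v z := by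
            by_contra hga
            exact hc.1 ((G.compl_adj v z).mpr ⟨Ne.symm hzv, hga⟩)
          have h2 : G.Adj w z := by
            by_contra hga
            exact hc.2 ((G.compl_adj w z).mpr ⟨Ne.symm hzw, hga⟩)
          exact hzs (huniq z h1 (hzS z h1 h2))
        rcases hor with h | h
        · exact SimpleGraph.Observed.dominate v (by simp) z h
        · exact SimpleGraph.Observed.dominate w (by simp) z h
    intro z
    by_cases hzs : z = s
    · subst hzs
      obtain ⟨x', hx'⟩ := hGc z
      have hadj : Gᶜ.Adj z x' := hx'
      exact SimpleGraph.Observed.force x' z (hobs x' hadj.ne.symm) hadj.symm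
        (fun u _ hus => hobs u hus)
    · exact hobs z hzs
  · -- Case B : γ_P(G) ≤ κ - 1
    push_neg at hCaseA
    refine Or.inl (Nat.sInf_le ⟨S.erase s₀, by rw [Finset.card_erase_of_mem hs₀S, hScard'], ?_⟩)
    have hobs : ∀ z, z ≠ s₀ → G.Observed ↑(S.erase s₀) z := by
      intro z hz
      by_cases hzS : z ∈ S
      · exact SimpleGraph.Observed.mem z (by simp [Finset.mem_erase, hz, hzS])
      · obtain ⟨w, hwS, hvw, hzSS, s₁, hs₁S, hzs₁⟩ := lemA z hzS
        by_cases h1 : s₁ = s₀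
        · subst h1
          obtain ⟨z', hz'1, hz'2, hz'3⟩ := hCaseA z s₁ hzS hs₁S hzs₁
          exact SimpleGraph.Observed.dominate z' (by simp [Finset.mem_erase, hz'3, hz'2]) z hz'1.symm
        · exact SimpleGraph.Observed.dominate s₁ (by simp [Finset.mem_erase, h1, hs₁S]) z hzs₁.symm
    intro z
    by_cases hz : z = s₀
    · subst hz
      have hAne : (A : V) ≠ z := fun h => hAS (h ▸ hs₀S)
      exact SimpleGraph.Observed.force (A : V) z (hobs _ hAne) hAs₀ (fun u _ hus => hobs u hus)
    · exact hobs z hz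
end

section
/- Suppose G is a finite simple graph having distinct vertices w, u, v, v', v'' such that N[v'] = N[v''] = {v, v', v''}, u ∈ N(v), and w ∉ N(v). Then γ_P(Ḡ) = 1, where Ḡ is the complement of G. -/
lemma not_observed_empty {V : Type*} (G : SimpleGraph V) (x : V)
    (h : G.Observed (∅ : Set V) x) : False := by
  induction h <;> simp_all

theorem powerDomNum_compl_eq_one_of_pendantPair {V : Type*} [Fintype V] (G : SimpleGraph V)
    (w u v v' v'' : V) (hdist : List.Pairwise (· ≠ ·) [w, u, v, v', v''])
    (h1 : insert v' (G.neighborSet v') = {v, v', v''})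
    (h2 : insert v'' (G.neighborSet v'') = {v, v', v''})
    (hu : G.Adj v u) (hw : ¬ G.Adj v w) :
    Gᶜ.powerDomNum = 1 := by
  simp only [List.pairwise_cons, List.mem_cons, List.mem_singleton, List.not_mem_nil,
    ] at hdist
  obtain ⟨hw', hu', hv', hv'', -⟩ := hdist
  have hwu : w ≠ u := hw' u (by simp)
  have hwv : w ≠ v := hw' v (by simp)
  have hwv' : w ≠ v' := hw' v' (by simp)
  have hwv'' : w ≠ v'' := hw' v'' (by simp)
  have huv : u ≠ v := hu' v (by simp)
  have huv' : u ≠ v' := hu' v' (by simp)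
  have huv'' : u ≠ v'' := hu' v'' (by simp)
  have hvv' : v ≠ v' := hv' v' (by simp)
  have hvv'' : v ≠ v'' := hv' v'' (by simp)
  have hv'v'' : v' ≠ v'' := hv'' v'' (by simp)
  have hadj' : ∀ x, G.Adj v' x ↔ (x = v ∨ x = v'') := by
    intro x
    constructor
    · intro hx
      have : x ∈ insert v' (G.neighborSet v') := Set.mem_insert_of_mem _ hx
      rw [h1] at this
      rcases this with h | h | h
      · exact Or.inl h
      · exact absurd h.symm hx.ne
      · exact Or.inr h
    · rintro (rfl | rfl)
      · have : x ∈ insert v' (G.neighborSet v') := by rw [h1]; simp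
        rcases this with h | h
        · exact absurd h hvv'
        · exact h
      · have : x ∈ insert v' (G.neighborSet v') := by rw [h1]; simp
        rcases this with h | h
        · exact absurd h hv'v''.symm
        · exact h
  have hadj'' : ∀ x, G.Adj v'' x ↔ (x = v ∨ x = v') := by
    intro x
    constructor
    · intro hx
      have : x ∈ insert v'' (G.neighborSet v'') := Set.mem_insert_of_mem _ hx
      rw [h2] at this
      rcases this with h | h | h
      · exact Or.inl h
      · exact Or.inr h
      · exact absurd h.symm hx.ne
    · rintro (rfl | rfl)
      · have : x ∈ insert v'' (G.neighborSet v'') := by rw [h2]; simp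
        rcases this with h | h
        · exact absurd h hvv''
        · exact h
      · have : x ∈ insert v'' (G.neighborSet v'') := by rw [h2]; simp
        rcases this with h | h
        · exact absurd h hv'v''
        · exact h
  set S : Finset V := {v'} with hS
  have hv'mem : v' ∈ (↑S : Set V) := by simp [hS]
  have step1 : ∀ x, x ≠ v → x ≠ v'' → Gᶜ.Observed ↑S x := by
    intro x hxv hxv''
    by_cases hxv' : x = v'
    · rw [hxv']; exact SimpleGraph.Observed.mem v' hv'mem
    · refine SimpleGraph.Observed.dominate v' hv'mem x ?_
      rw [SimpleGraph.compl_adj]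
      refine ⟨Ne.symm hxv', fun h => ?_⟩
      rcases (hadj' x).mp h with rfl | rfl
      · exact hxv rfl
      · exact hxv'' rfl
  have hu_obs : Gᶜ.Observed ↑S u := step1 u huv huv''
  have hv''_obs : Gᶜ.Observed ↑S v'' := by
    refine SimpleGraph.Observed.force u v'' hu_obs ?_ ?_
    · rw [SimpleGraph.compl_adj]
      refine ⟨huv'', fun h => ?_⟩
      rcases (hadj'' u).mp h.symm with rfl | rfl
      · exact huv rfl
      · exact huv' rfl
    · intro x hx hne
      refine step1 x ?_ hne
      rintro rfl
      rw [SimpleGraph.compl_adj] at hx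
      exact hx.2 hu.symm
  have step2 : ∀ x, x ≠ v → Gᶜ.Observed ↑S x := by
    intro x hxv
    by_cases hxv'' : x = v''
    · exact hxv'' ▸ hv''_obs
    · exact step1 x hxv hxv''
  have hw_obs : Gᶜ.Observed ↑S w := step2 w hwv
  have hv_obs : Gᶜ.Observed ↑S v := by
    refine SimpleGraph.Observed.force w v hw_obs ?_ ?_
    · rw [SimpleGraph.compl_adj]
      exact ⟨hwv, fun h => hw h.symm⟩
    · intro x hx hne
      exact step2 x hne
  have hpd : Gᶜ.IsPowerDominating ↑S := by
    intro x
    by_cases hxv : x = v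
    · exact hxv ▸ hv_obs
    · exact step2 x hxv
  have hmem : 1 ∈ {k | ∃ S : Finset V, S.card = k ∧ Gᶜ.IsPowerDominating ↑S} :=
    ⟨S, by simp [hS], hpd⟩
  refine le_antisymm (Nat.sInf_le hmem) ?_
  rw [Nat.one_le_iff_ne_zero]
  intro h0
  have := Nat.sInf_mem ⟨1, hmem⟩
  rw [SimpleGraph.powerDomNum] at h0
  rw [h0] at this
  obtain ⟨T, hT0, hTpd⟩ := this
  rw [Finset.card_eq_zero] at hT0
  subst hT0
  have := hTpd v
  rw [Finset.coe_empty] at this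
  exact not_observed_empty _ _ this
end

section
/- Let G be a finite simple graph and let W be a set of at least two vertices of G such that no vertex outside W is adjacent to exactly one vertex of W. Then every power dominating set of G contains a vertex of W or a neighbor of a vertex in W. -/
theorem powerDominating_meets_closed_nbhd {V : Type*} [Fintype V] (G : SimpleGraph V)
    (W : Set V) (hW : 2 ≤ W.ncard)
    (h : ∀ v ∉ W, {w ∈ W | G.Adj v w}.ncard ≠ 1) :
    ∀ S : Set V, G.IsPowerDominating S →
      ∃ x ∈ S, x ∈ W ∨ ∃ w ∈ W, G.Adj x w := by
  intro S hS
  by_contra hcon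
  push_neg at hcon
  have key : ∀ v, G.Observed S v → v ∉ W := by
    intro v hv
    induction hv with
    | mem v hvS => exact (hcon v hvS).1
    | dominate v hvS w hadj => exact fun hw => (hcon v hvS).2 w hw hadj
    | force v w hv hadj hall ihv ihall =>
      intro hw
      apply h v ihv
      have : {w' ∈ W | G.Adj v w'} = {w} := by
        ext u
        constructor
        · rintro ⟨huW, hu⟩
          by_contra hne
          exact ihall u hu hne huW
        · rintro rfl; exact ⟨hw, hadj⟩
      rw [this, Set.ncard_singleton]
  obtain ⟨w, hw⟩ := Set.nonempty_of_ncard_ne_zero (by omega : W.ncard ≠ 0)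
  exact key w (hS w) hw
end

section
/- For every r ≥ 2, the complement of the necklace graph N_r satisfies γ_P(complement of N_r) = 2. -/
/-- The necklace graph `N_r`: `r` copies of `K₄ - e` arranged in a cycle, where copy `i`
consists of vertices `(i,0),(i,1),(i,2),(i,3)` with the edge `{(i,2),(i,3)}` missing,
and each degree-2 vertex `(i,2)` is joined to the degree-2 vertex `(i+1,3)` of the
following copy. -/
def necklaceGraph (r : ℕ) : SimpleGraph (ZMod r × Fin 4) :=
  SimpleGraph.fromRel (fun x y =>
    (x.1 = y.1 ∧ ¬(x.2 = 2 ∧ y.2 = 3) ∧ ¬(x.2 = 3 ∧ y.2 = 2)) ∨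
    (y.1 = x.1 + 1 ∧ x.2 = 2 ∧ y.2 = 3))

lemma necklace_adj_iff (r : ℕ) (x y : ZMod r × Fin 4) :
    (necklaceGraph r).Adj x y ↔ x ≠ y ∧
      ((x.1 = y.1 ∧ ¬(x.2 = 2 ∧ y.2 = 3) ∧ ¬(x.2 = 3 ∧ y.2 = 2)) ∨
       (y.1 = x.1 + 1 ∧ x.2 = 2 ∧ y.2 = 3) ∨
       (x.1 = y.1 + 1 ∧ y.2 = 2 ∧ x.2 = 3)) := by
  simp only [necklaceGraph, SimpleGraph.fromRel_adj]
  constructor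
  · rintro ⟨hne, h⟩
    refine ⟨hne, ?_⟩
    rcases h with (h | h) | (h | h)
    · exact Or.inl h
    · exact Or.inr (Or.inl h)
    · exact Or.inl ⟨h.1.symm, fun hc => h.2.2 ⟨hc.2, hc.1⟩, fun hc => h.2.1 ⟨hc.2, hc.1⟩⟩
    · exact Or.inr (Or.inr h)
  · rintro ⟨hne, h⟩
    refine ⟨hne, ?_⟩
    rcases h with h | h | h
    · exact Or.inl (Or.inl h)
    · exact Or.inl (Or.inr h)
    · exact Or.inr (Or.inr h)

lemma cadj (r : ℕ) (x y : ZMod r × Fin 4) :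
    (necklaceGraph r)ᶜ.Adj x y ↔ x ≠ y ∧
      (x.1 = y.1 → ((x.2 = 2 ∧ y.2 = 3) ∨ (x.2 = 3 ∧ y.2 = 2))) ∧
      ¬(y.1 = x.1 + 1 ∧ x.2 = 2 ∧ y.2 = 3) ∧ ¬(x.1 = y.1 + 1 ∧ y.2 = 2 ∧ x.2 = 3) := by
  rw [SimpleGraph.compl_adj, necklace_adj_iff]
  tauto

lemma not_observed {V : Type*} (G : SimpleGraph V) (S T : Set V)
    (hST : ∀ s ∈ S, ∀ t ∈ T, ¬ G.Adj s t ∧ s ≠ t)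
    (hT : ∀ v, v ∉ T → ∀ w ∈ T, G.Adj v w → ∃ u ∈ T, u ≠ w ∧ G.Adj v u)
    {v : V} (h : G.Observed S v) : v ∉ T := by
  induction h with
  | mem v hv => exact fun ht => (hST v hv v ht).2 rfl
  | dominate v hv w haw => exact fun ht => (hST v hv w ht).1 haw
  | force v w hv haw hall ihv ihall =>
      intro hwT
      obtain ⟨u, huT, hune, hau⟩ := hT v ihv w hwT haw
      exact ihall u hau hune huT

lemma one_not_pd (r : ℕ) (hr : 2 ≤ r) (s : ZMod r × Fin 4) :
    ¬ (necklaceGraph r)ᶜ.IsPowerDominating {s} := by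
  haveI : Fact (1 < r) := ⟨hr⟩
  obtain ⟨i, j⟩ := s
  intro hpd
  fin_cases j
  -- case j = 0 : T = {(i,1),(i,2),(i,3)}
  · refine not_observed _ _ {(i,1),(i,2),(i,3)} ?_ ?_ (hpd (i,1)) (by simp)
    · rintro s (rfl : s = (i,0)) t ht
      simp only [Set.mem_insert_iff, Set.mem_singleton_iff] at ht
      rcases ht with rfl | rfl | rfl <;>
        simp [SimpleGraph.compl_adj, necklace_adj_iff, Prod.ext_iff]
    · rintro v hv w hw hadj
      simp only [Set.mem_insert_iff, Set.mem_singleton_iff, not_or] at hv hw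
      obtain ⟨hv1, hv2, hv3⟩ := hv
      rw [cadj] at hadj
      rcases hw with rfl | rfl | rfl
      · -- w = (i,1); v.1 ≠ i
        have hvi : v.1 ≠ i := by
          intro h; rcases hadj.2.1 h with ⟨_, h'⟩ | ⟨_, h'⟩ <;> simp at h'
        by_cases hv13 : v = (i+1, 3)
        · refine ⟨(i,3), by simp, by simp, ?_⟩
          subst hv13
          rw [cadj]
          refine ⟨by simp [Prod.ext_iff, hvi], by simp [hvi], by simp, ?_⟩
          rintro ⟨h1, h2, h3⟩; simp at h2
        · refine ⟨(i,2), by simp, by simp [Prod.ext_iff], ?_⟩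
          rw [cadj]
          refine ⟨by simp [Prod.ext_iff]; intro h; exact absurd h hvi, by simp [hvi], ?_, ?_⟩
          · rintro ⟨h1, h2, h3⟩; simp at h3
          · rintro ⟨h1, h2, h3⟩
            exact hv13 (Prod.ext (by rw [h1]) h3)
      · -- w = (i,2); derive v.1 ≠ i since v ≠ (i,3)
        have hvi : v.1 ≠ i := by
          intro h
          rcases hadj.2.1 h with ⟨h', _⟩ | ⟨h', _⟩
          · exact hadj.1 (Prod.ext h h')
          · exact hv3 (Prod.ext h h')
        refine ⟨(i,1), by simp, by simp [Prod.ext_iff], ?_⟩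
        rw [cadj]
        exact ⟨by simp [Prod.ext_iff, hvi], by simp [hvi], by simp, by simp⟩
      · -- w = (i,3)
        have hvi : v.1 ≠ i := by
          intro h
          rcases hadj.2.1 h with ⟨h', _⟩ | ⟨h', _⟩
          · exact hv2 (Prod.ext h h')
          · exact hadj.1 (Prod.ext h h')
        refine ⟨(i,1), by simp, by simp [Prod.ext_iff], ?_⟩
        rw [cadj]
        exact ⟨by simp [Prod.ext_iff, hvi], by simp [hvi], by simp, by simp⟩
  -- case j = 1 : T = {(i,0),(i,2),(i,3)}
  · refine not_observed _ _ {(i,0),(i,2),(i,3)} ?_ ?_ (hpd (i,0)) (by simp)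
    · rintro s (rfl : s = (i,1)) t ht
      simp only [Set.mem_insert_iff, Set.mem_singleton_iff] at ht
      rcases ht with rfl | rfl | rfl <;>
        simp [SimpleGraph.compl_adj, necklace_adj_iff, Prod.ext_iff]
    · rintro v hv w hw hadj
      simp only [Set.mem_insert_iff, Set.mem_singleton_iff, not_or] at hv hw
      obtain ⟨hv1, hv2, hv3⟩ := hv
      rw [cadj] at hadj
      rcases hw with rfl | rfl | rfl
      · have hvi : v.1 ≠ i := by
          intro h; rcases hadj.2.1 h with ⟨_, h'⟩ | ⟨_, h'⟩ <;> simp at h'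
        by_cases hv13 : v = (i+1, 3)
        · refine ⟨(i,3), by simp, by simp, ?_⟩
          subst hv13
          rw [cadj]
          refine ⟨by simp [Prod.ext_iff, hvi], by simp [hvi], by simp, ?_⟩
          rintro ⟨h1, h2, h3⟩; simp at h2
        · refine ⟨(i,2), by simp, by simp [Prod.ext_iff], ?_⟩
          rw [cadj]
          refine ⟨by simp [Prod.ext_iff]; intro h; exact absurd h hvi, by simp [hvi], ?_, ?_⟩
          · rintro ⟨h1, h2, h3⟩; simp at h3
          · rintro ⟨h1, h2, h3⟩
            exact hv13 (Prod.ext (by rw [h1]) h3)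
      · have hvi : v.1 ≠ i := by
          intro h
          rcases hadj.2.1 h with ⟨h', _⟩ | ⟨h', _⟩
          · exact hadj.1 (Prod.ext h h')
          · exact hv3 (Prod.ext h h')
        refine ⟨(i,0), by simp, by simp [Prod.ext_iff], ?_⟩
        rw [cadj]
        exact ⟨by simp [Prod.ext_iff, hvi], by simp [hvi], by simp, by simp⟩
      · have hvi : v.1 ≠ i := by
          intro h
          rcases hadj.2.1 h with ⟨h', _⟩ | ⟨h', _⟩
          · exact hv2 (Prod.ext h h')
          · exact hadj.1 (Prod.ext h h')
        refine ⟨(i,0), by simp, by simp [Prod.ext_iff], ?_⟩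
        rw [cadj]
        exact ⟨by simp [Prod.ext_iff, hvi], by simp [hvi], by simp, by simp⟩
  -- case j = 2 : T = {(i,0),(i,1)}
  · refine not_observed _ _ {(i,0),(i,1)} ?_ ?_ (hpd (i,0)) (by simp)
    · rintro s (rfl : s = (i,2)) t ht
      simp only [Set.mem_insert_iff, Set.mem_singleton_iff] at ht
      rcases ht with rfl | rfl <;>
        simp [SimpleGraph.compl_adj, necklace_adj_iff, Prod.ext_iff]
    · rintro v hv w hw hadj
      simp only [Set.mem_insert_iff, Set.mem_singleton_iff, not_or] at hv hw
      obtain ⟨hv1, hv2⟩ := hv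
      rw [cadj] at hadj
      rcases hw with rfl | rfl
      · have hvi : v.1 ≠ i := by
          intro h; rcases hadj.2.1 h with ⟨_, h'⟩ | ⟨_, h'⟩ <;> simp at h'
        refine ⟨(i,1), by simp, by simp [Prod.ext_iff], ?_⟩
        rw [cadj]
        exact ⟨by simp [Prod.ext_iff, hvi], by simp [hvi], by simp, by simp⟩
      · have hvi : v.1 ≠ i := by
          intro h; rcases hadj.2.1 h with ⟨_, h'⟩ | ⟨_, h'⟩ <;> simp at h'
        refine ⟨(i,0), by simp, by simp [Prod.ext_iff], ?_⟩
        rw [cadj]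
        exact ⟨by simp [Prod.ext_iff, hvi], by simp [hvi], by simp, by simp⟩
  -- case j = 3 : T = {(i,0),(i,1)}
  · refine not_observed _ _ {(i,0),(i,1)} ?_ ?_ (hpd (i,0)) (by simp)
    · rintro s (rfl : s = (i,3)) t ht
      simp only [Set.mem_insert_iff, Set.mem_singleton_iff] at ht
      rcases ht with rfl | rfl <;>
        simp [SimpleGraph.compl_adj, necklace_adj_iff, Prod.ext_iff]
    · rintro v hv w hw hadj
      simp only [Set.mem_insert_iff, Set.mem_singleton_iff, not_or] at hv hw
      obtain ⟨hv1, hv2⟩ := hv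
      rw [cadj] at hadj
      rcases hw with rfl | rfl
      · have hvi : v.1 ≠ i := by
          intro h; rcases hadj.2.1 h with ⟨_, h'⟩ | ⟨_, h'⟩ <;> simp at h'
        refine ⟨(i,1), by simp, by simp [Prod.ext_iff], ?_⟩
        rw [cadj]
        exact ⟨by simp [Prod.ext_iff, hvi], by simp [hvi], by simp, by simp⟩
      · have hvi : v.1 ≠ i := by
          intro h; rcases hadj.2.1 h with ⟨_, h'⟩ | ⟨_, h'⟩ <;> simp at h'
        refine ⟨(i,0), by simp, by simp [Prod.ext_iff], ?_⟩
        rw [cadj]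
        exact ⟨by simp [Prod.ext_iff, hvi], by simp [hvi], by simp, by simp⟩

lemma two_pd (r : ℕ) (hr : 2 ≤ r) :
    (necklaceGraph r)ᶜ.IsPowerDominating
      (↑({((0:ZMod r),(0:Fin 4)), (0,1)} : Finset (ZMod r × Fin 4))) := by
  haveI : Fact (1 < r) := ⟨hr⟩
  set G := (necklaceGraph r)ᶜ
  set S : Set (ZMod r × Fin 4) :=
    (↑({((0:ZMod r),(0:Fin 4)), (0,1)} : Finset (ZMod r × Fin 4))) with hS
  have hmemA : ((0:ZMod r),(0:Fin 4)) ∈ S := by simp [hS]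
  have hmemB : ((0:ZMod r),(1:Fin 4)) ∈ S := by simp [hS]
  have hA : ∀ v : ZMod r × Fin 4, v ≠ (0,2) → v ≠ (0,3) → G.Observed S v := by
    rintro ⟨i, j⟩ h2 h3
    by_cases hi : i = 0
    · subst hi
      fin_cases j
      · exact SimpleGraph.Observed.mem _ hmemA
      · exact SimpleGraph.Observed.mem _ hmemB
      · exact absurd rfl h2
      · exact absurd rfl h3
    · refine SimpleGraph.Observed.dominate _ hmemA _ ?_
      rw [show G = (necklaceGraph r)ᶜ from rfl, cadj]
      refine ⟨by simp [Prod.ext_iff]; intro h; exact absurd h.symm hi,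
        by intro h; exact absurd h.symm hi, by simp, by simp⟩
  have hB : G.Observed S (0,3) := by
    refine SimpleGraph.Observed.force (1,3) (0,3)
      (hA _ (by simp [Prod.ext_iff]) (by simp [Prod.ext_iff, one_ne_zero])) ?_ ?_
    · rw [show G = (necklaceGraph r)ᶜ from rfl, cadj]
      refine ⟨by simp [Prod.ext_iff, one_ne_zero], by simp [one_ne_zero], by simp, ?_⟩
      rintro ⟨h1, h2, h3⟩; simp at h2
    · intro u hu hne
      refine hA u ?_ hne
      rintro rfl
      rw [show G = (necklaceGraph r)ᶜ from rfl, cadj] at hu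
      exact hu.2.2.2 ⟨by ring, rfl, rfl⟩
  have hC : G.Observed S (0,2) := by
    refine SimpleGraph.Observed.force (-1,2) (0,2)
      (hA _ (by simp [Prod.ext_iff, neg_eq_zero, one_ne_zero]) (by simp [Prod.ext_iff])) ?_ ?_
    · rw [show G = (necklaceGraph r)ᶜ from rfl, cadj]
      refine ⟨by simp [Prod.ext_iff, neg_eq_zero, one_ne_zero],
        by simp [neg_eq_zero, one_ne_zero], ?_, by simp⟩
      rintro ⟨h1, h2, h3⟩; simp at h3
    · intro u hu hne
      refine hA u hne ?_
      rintro rfl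
      rw [show G = (necklaceGraph r)ᶜ from rfl, cadj] at hu
      exact hu.2.2.1 ⟨by ring, rfl, rfl⟩
  intro v
  by_cases h2 : v = (0,2)
  · exact h2 ▸ hC
  by_cases h3 : v = (0,3)
  · exact h3 ▸ hB
  · exact hA v h2 h3

theorem powerDomNum_compl_necklace (r : ℕ) (hr : 2 ≤ r) :
    (necklaceGraph r)ᶜ.powerDomNum = 2 := by
  haveI : Fact (1 < r) := ⟨hr⟩
  have h2 : 2 ∈ {k | ∃ S : Finset (ZMod r × Fin 4), S.card = k ∧
      (necklaceGraph r)ᶜ.IsPowerDominating ↑S} := by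
    refine ⟨{((0:ZMod r),(0:Fin 4)), (0,1)}, ?_, two_pd r hr⟩
    rw [Finset.card_pair (by simp [Prod.ext_iff])]
  have hlow : ∀ k ∈ {k | ∃ S : Finset (ZMod r × Fin 4), S.card = k ∧
      (necklaceGraph r)ᶜ.IsPowerDominating ↑S}, 2 ≤ k := by
    rintro k ⟨S, hc, hpd⟩
    by_contra hk
    interval_cases k
    · rw [Finset.card_eq_zero] at hc
      subst hc
      have := not_observed ((necklaceGraph r)ᶜ) ↑(∅ : Finset (ZMod r × Fin 4)) Set.univ
        (by simp) (fun v hv => absurd (Set.mem_univ v) hv) (hpd ((0:ZMod r),(0:Fin 4)))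
      exact this (Set.mem_univ _)
    · rw [Finset.card_eq_one] at hc
      obtain ⟨a, rfl⟩ := hc
      rw [Finset.coe_singleton] at hpd
      exact one_not_pd r hr a hpd
  exact le_antisymm (Nat.sInf_le h2) (le_csInf ⟨2, h2⟩ hlow)
end

section
/- For every integer r ≥ 2, the graph G = rK_3 (the disjoint union of r triangles), which has order n = 3r, satisfies γ_P(G) = n/3 and γ_P(Ḡ) = 2, so γ_P(G) + γ_P(Ḡ) = n/3 + 2. -/
/-- The graph `rK₃`: the disjoint union of `r` triangles, on vertex set `Fin r × Fin 3`,
where two distinct vertices are adjacent iff they lie in the same copy. -/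
def disjointTriangles (r : ℕ) : SimpleGraph (Fin r × Fin 3) :=
  SimpleGraph.fromRel (fun x y => x.1 = y.1)


lemma dT_adj {r : ℕ} {x y : Fin r × Fin 3} :
    (disjointTriangles r).Adj x y ↔ x ≠ y ∧ x.1 = y.1 := by
  constructor
  · rintro ⟨h1, h2 | h2⟩
    · exact ⟨h1, h2⟩
    · exact ⟨h1, h2.symm⟩
  · rintro ⟨h1, h2⟩
    exact ⟨h1, Or.inl h2⟩

lemma dTc_adj {r : ℕ} {x y : Fin r × Fin 3} :
    ((disjointTriangles r)ᶜ).Adj x y ↔ x.1 ≠ y.1 := by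
  rw [SimpleGraph.compl_adj, dT_adj]
  constructor
  · rintro ⟨h1, h2⟩
    exact fun he => h2 ⟨h1, he⟩
  · intro h
    have hne : x ≠ y := fun he => h (by rw [he])
    exact ⟨hne, fun hc => h hc.2⟩

lemma obs_tri {r : ℕ} {S : Set (Fin r × Fin 3)} {v : Fin r × Fin 3}
    (h : (disjointTriangles r).Observed S v) : ∃ s ∈ S, s.1 = v.1 := by
  induction h with
  | mem v hv => exact ⟨v, hv, rfl⟩
  | dominate v hv w hadj => exact ⟨v, hv, (dT_adj.mp hadj).2⟩
  | force v w hv hadj hall ihv ihall =>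
    obtain ⟨s, hs, hs1⟩ := ihv
    exact ⟨s, hs, hs1.trans (dT_adj.mp hadj).2⟩

lemma obs_empty {r : ℕ} {v : Fin r × Fin 3}
    (h : ((disjointTriangles r)ᶜ).Observed (↑(∅ : Finset (Fin r × Fin 3))) v) : False := by
  induction h with
  | mem v hv => simp at hv
  | dominate v hv => simp at hv
  | force v w hv hadj hall ihv ihall => exact ihv

lemma obs_single {r : ℕ} {s v : Fin r × Fin 3}
    (h : ((disjointTriangles r)ᶜ).Observed (↑({s} : Finset (Fin r × Fin 3))) v) :
    ¬ (v.1 = s.1 ∧ v ≠ s) := by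
  induction h with
  | mem v hv =>
    simp only [Finset.coe_singleton, Set.mem_singleton_iff] at hv
    rintro ⟨_, hne⟩; exact hne hv
  | dominate v hv w hadj =>
    simp only [Finset.coe_singleton, Set.mem_singleton_iff] at hv
    subst hv
    rintro ⟨h1, _⟩
    exact (dTc_adj.mp hadj) h1.symm
  | force v w hv hadj hall ihv ihall =>
    rintro ⟨h1, h2⟩
    -- w is in s's triangle, w ≠ s.  Find the third vertex w' of that triangle.
    have hw2 : w.2 ≠ s.2 := by
      intro he
      exact h2 (Prod.ext h1 he)
    have key : ∀ a b : Fin 3, a ≠ b → ∃ c : Fin 3, c ≠ a ∧ c ≠ b := by decide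
    obtain ⟨c, hc1, hc2⟩ := key w.2 s.2 hw2
    set w' : Fin r × Fin 3 := (s.1, c) with hw'
    have hw'w : w' ≠ w := by
      intro he
      exact hc1 (by rw [← he])
    have hw'tri : w'.1 = s.1 ∧ w' ≠ s := by
      refine ⟨rfl, fun he => hc2 (by rw [← he])⟩
    -- v itself is not in s's triangle minus s (by ihv)
    by_cases hv1 : v.1 = s.1
    · -- then v = s, but s not adjacent to w (same triangle)
      have hvs : v = s := by
        by_contra hne
        exact ihv ⟨hv1, hne⟩
      subst hvs
      exact (dTc_adj.mp hadj) h1.symm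
    · -- v in a different triangle, so v adjacent to w', which must be observed
      have hadj' : ((disjointTriangles r)ᶜ).Adj v w' := by
        rw [dTc_adj]; exact fun he => hv1 (he.trans hw'tri.1)
      exact ihall w' hadj' hw'w hw'tri

theorem powerDom_disjointTriangles (r : ℕ) (hr : 2 ≤ r) :
    (disjointTriangles r).powerDomNum = r ∧
    (disjointTriangles r)ᶜ.powerDomNum = 2 ∧
    (disjointTriangles r).powerDomNum + (disjointTriangles r)ᶜ.powerDomNum = r + 2 := by
  have z : Fin r := ⟨0, by omega⟩
  have o : Fin r := ⟨1, by omega⟩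
  have hmemG : r ∈ {k | ∃ S : Finset (Fin r × Fin 3), S.card = k ∧
      (disjointTriangles r).IsPowerDominating ↑S} := by
    refine ⟨Finset.univ.image (fun i : Fin r => (i, (0 : Fin 3))), ?_, ?_⟩
    · rw [Finset.card_image_of_injective _ (fun a b h => (Prod.mk.injEq _ _ _ _).mp h |>.1)]
      simp
    · rintro ⟨i, a⟩
      by_cases ha : a = 0
      · subst ha
        exact SimpleGraph.Observed.mem _ (by simp)
      · refine SimpleGraph.Observed.dominate (i, 0) (by simp) _ ?_
        rw [dT_adj]
        exact ⟨fun he => ha ((Prod.mk.injEq _ _ _ _).mp he).2.symm, rfl⟩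
  have hmemGc : 2 ∈ {k | ∃ S : Finset (Fin r × Fin 3), S.card = k ∧
      ((disjointTriangles r)ᶜ).IsPowerDominating ↑S} := by
    refine ⟨{((⟨0, by omega⟩ : Fin r), (0 : Fin 3)), ((⟨1, by omega⟩ : Fin r), (0 : Fin 3))}, ?_, ?_⟩
    · rw [Finset.card_insert_of_notMem, Finset.card_singleton]
      simp only [Finset.mem_singleton]
      intro h
      have := ((Prod.mk.injEq _ _ _ _).mp h).1
      rw [Fin.mk.injEq] at this
      omega
    · rintro ⟨i, a⟩
      by_cases hi : (i : ℕ) = 0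
      · refine SimpleGraph.Observed.dominate ((⟨1, by omega⟩ : Fin r), (0 : Fin 3)) (by simp) _ ?_
        rw [dTc_adj]
        intro h
        rw [Fin.ext_iff] at h
        simp at h
        omega
      · refine SimpleGraph.Observed.dominate ((⟨0, by omega⟩ : Fin r), (0 : Fin 3)) (by simp) _ ?_
        rw [dTc_adj]
        intro h
        rw [Fin.ext_iff] at h
        simp at h
        omega
  have hG : (disjointTriangles r).powerDomNum = r := by
    apply le_antisymm (Nat.sInf_le hmemG)
    apply le_csInf ⟨r, hmemG⟩
    rintro k ⟨S, hcard, hpd⟩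
    have hsub : Finset.univ ⊆ S.image Prod.fst := by
      intro i _
      obtain ⟨s, hs, hs1⟩ := obs_tri (hpd (i, 0))
      exact Finset.mem_image.mpr ⟨s, hs, hs1⟩
    calc r = (Finset.univ : Finset (Fin r)).card := by simp
      _ ≤ (S.image Prod.fst).card := Finset.card_le_card hsub
      _ ≤ S.card := Finset.card_image_le
      _ = k := hcard
  have hGc : ((disjointTriangles r)ᶜ).powerDomNum = 2 := by
    apply le_antisymm (Nat.sInf_le hmemGc)
    apply le_csInf ⟨2, hmemGc⟩
    rintro k ⟨S, hcard, hpd⟩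
    by_contra hk
    push_neg at hk
    interval_cases k
    · rw [Finset.card_eq_zero] at hcard
      subst hcard
      exact obs_empty (hpd ((⟨0, by omega⟩ : Fin r), 0))
    · rw [Finset.card_eq_one] at hcard
      obtain ⟨s, rfl⟩ := hcard
      have key : ∀ b : Fin 3, ∃ c : Fin 3, c ≠ b := by decide
      obtain ⟨c, hc⟩ := key s.2
      exact obs_single (hpd (s.1, c)) ⟨rfl, fun he => hc (by rw [← he])⟩
  exact ⟨hG, hGc, by rw [hG, hGc]⟩
end
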